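/- Let 0 < δ₁ ≤ δ₂ with δ₁ + δ₂ > 1 and δ₂ < 1, and let a ∈ ℝ. Then ∫_{-∞}^{∞} dθ / (⟨θ⟩^{δ₁} ⟨a-θ⟩^{δ₂}) ≤ C / ⟨a⟩^{δ₁ - (1 - δ₂)}, for a constant C depending only on δ₁, δ₂. -/

import Mathlib

/-!
Replace `⟨x⟩` by the comparable weight `1 + |x|` (`⟨x⟩ ≤ 1 + |x| ≤ √2 ⟨x⟩`), whose powers have
explicit primitives, and split the line at scale `R = |a| / 2`. On `|θ| ≤ R` the factor
`⟨a - θ⟩^{-δ₂}` is `≲ ⟨a⟩^{-δ₂}` while `∫_{|θ| ≤ R} ⟨θ⟩^{-δ₁} ≲ ⟨a⟩^{1 - δ₁}` since `δ₁ < 1`;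
the region `|a - θ| ≤ R` is the mirror image under `θ ↦ a - θ`. Off both, `⟨θ⟩ ≤ 3 ⟨a - θ⟩`, so the
integrand is `≲ ⟨θ⟩^{-(δ₁ + δ₂)}`, whose integral over `|θ| > R` is `≲ ⟨a⟩^{1 - δ₁ - δ₂}`
since `δ₁ + δ₂ > 1`.
-/

open MeasureTheory

/-- The Japanese bracket `⟨x⟩ = (1 + x²)^{1/2}`. -/
noncomputable def jb (x : ℝ) : ℝ := Real.sqrt (1 + x ^ 2)

open Set

lemma integral_le_setIntegral_add_add_of_union_eq_univ {α : Type*} [MeasurableSpace α]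
    {μ : Measure α} {f : α → ℝ} (hf : 0 ≤ f) (hfi : Integrable f μ) {s t u : Set α}
    (hcover : s ∪ t ∪ u = univ) :
    ∫ x, f x ∂μ ≤ (∫ x in s, f x ∂μ) + (∫ x in t, f x ∂μ) + ∫ x in u, f x ∂μ := by
  have hle : μ ≤ μ.restrict s + μ.restrict t + μ.restrict u :=
    calc μ = μ.restrict (s ∪ t ∪ u) := by rw [hcover, Measure.restrict_univ]
      _ ≤ μ.restrict (s ∪ t) + μ.restrict u := Measure.restrict_union_le _ _
      _ ≤ _ := add_le_add_left (Measure.restrict_union_le _ _) _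
  have hst : Integrable f (μ.restrict s + μ.restrict t) := hfi.restrict.add_measure hfi.restrict
  rw [← integral_add_measure hfi.restrict hfi.restrict, ← integral_add_measure hst hfi.restrict]
  exact integral_mono_measure hle (Filter.Eventually.of_forall hf) (hst.add_measure hfi.restrict)

lemma setIntegral_comp_abs (g : ℝ → ℝ) {s : Set ℝ} (hs : MeasurableSet s) :
    ∫ x in (fun x => |x|) ⁻¹' s, g |x| = 2 * ∫ t in s ∩ Ioi 0, g t := by
  rw [← integral_indicator (hs.preimage measurable_abs)]
  have hind : ((fun x => |x|) ⁻¹' s).indicator (fun x => g |x|) = fun x => s.indicator g |x| :=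
    funext fun x => indicator_comp_right (fun x => |x|)
  rw [hind, integral_comp_abs (f := s.indicator g), setIntegral_indicator hs, inter_comm]

lemma setIntegral_abs_le_one_add_abs_rpow_neg {p : ℝ} (hp : p < 1) {R : ℝ} (hR : 0 ≤ R) :
    ∫ x in {x | |x| ≤ R}, (1 + |x|) ^ (-p) = 2 * (((1 + R) ^ (1 - p) - 1) / (1 - p)) := by
  refine (setIntegral_comp_abs (fun t => (1 + t) ^ (-p)) measurableSet_Iic).trans ?_
  rw [inter_comm, Ioi_inter_Iic, ← intervalIntegral.integral_of_le hR,
    intervalIntegral.integral_comp_add_left (fun x => x ^ (-p)),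
    integral_rpow (Or.inl (by linarith))]
  simp only [add_zero, Real.one_rpow]
  ring_nf

lemma setIntegral_lt_abs_one_add_abs_rpow_neg {q : ℝ} (hq : 1 < q) {R : ℝ} (hR : 0 ≤ R) :
    ∫ x in {x | R < |x|}, (1 + |x|) ^ (-q) = 2 * ((1 + R) ^ (1 - q) / (q - 1)) := by
  refine (setIntegral_comp_abs (fun t => (1 + t) ^ (-q)) measurableSet_Ioi).trans ?_
  have hshift := (measurePreserving_add_right volume (1 : ℝ)).setIntegral_preimage_emb
    (MeasurableEquiv.addRight (1 : ℝ)).measurableEmbedding (fun x => x ^ (-q)) (Ioi (1 + R))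
  rw [preimage_add_const_Ioi, add_sub_cancel_left,
    integral_Ioi_rpow_of_lt (by linarith) (by linarith)] at hshift
  rw [Ioi_inter_Ioi, max_eq_left hR]
  simp_rw [add_comm (1 : ℝ)] at hshift ⊢
  rw [hshift, show -q + 1 = 1 - q by ring, ← neg_sub q 1, div_neg, neg_div, neg_neg]

lemma rpow_neg_le_mul_rpow_neg {x y c p : ℝ} (hx : 0 < x) (hc : 0 < c) (hp : 0 ≤ p)
    (h : x ≤ c * y) : y ^ (-p) ≤ c ^ p * x ^ (-p) := by
  have hy : 0 < y := pos_of_mul_pos_right (hx.trans_le h) hc.le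
  calc y ^ (-p) = c ^ p * (c * y) ^ (-p) := by
        rw [Real.mul_rpow hc.le hy.le, Real.rpow_neg hc.le, mul_inv_cancel_left₀ (by positivity)]
    _ ≤ c ^ p * x ^ (-p) :=
        mul_le_mul_of_nonneg_left (Real.rpow_le_rpow_of_nonpos hx h (neg_nonpos.2 hp))
          (by positivity)

lemma one_add_abs_le_two_mul_of_abs_le_half {a θ : ℝ} (h : |θ| ≤ |a| / 2) :
    1 + |a| ≤ 2 * (1 + |a - θ|) := by
  linarith [abs_sub_abs_le_abs_sub a θ]

lemma one_add_abs_le_three_mul_of_half_lt_abs {a θ : ℝ} (h : |a| / 2 < |a - θ|) :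
    1 + |θ| ≤ 3 * (1 + |a - θ|) := by
  have := abs_sub a (a - θ)
  rw [sub_sub_cancel] at this
  linarith

lemma integrable_one_add_abs_rpow_neg {q : ℝ} (hq : 1 < q) :
    Integrable fun x : ℝ => (1 + |x|) ^ (-q) := by
  simpa using integrable_one_add_norm (E := ℝ) (μ := volume) (r := q) (by simpa using hq)

namespace WeightConvolution

variable {p r : ℝ}

lemma integrable (hp : 0 ≤ p) (hr : 0 ≤ r) (hpr : 1 < p + r) (a : ℝ) :
    Integrable fun θ => (1 + |θ|) ^ (-p) * (1 + |a - θ|) ^ (-r) := by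
  have hq := integrable_one_add_abs_rpow_neg hpr
  refine (hq.add (hq.comp_sub_left a)).mono' (by fun_prop) (Filter.Eventually.of_forall fun θ => ?_)
  set m := min (1 + |θ|) (1 + |a - θ|) with hm_def
  have hm : 0 < m := lt_min (by positivity) (by positivity)
  have hle : (1 + |θ|) ^ (-p) * (1 + |a - θ|) ^ (-r) ≤ m ^ (-(p + r)) := by
    rw [neg_add, Real.rpow_add hm]
    exact mul_le_mul (Real.rpow_le_rpow_of_nonpos hm (min_le_left _ _) (neg_nonpos.2 hp))
      (Real.rpow_le_rpow_of_nonpos hm (min_le_right _ _) (neg_nonpos.2 hr)) (by positivity)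
      (by positivity)
  rw [Real.norm_eq_abs, abs_of_nonneg (by positivity)]
  refine hle.trans ?_
  rcases min_choice (1 + |θ|) (1 + |a - θ|) with h | h
  · rw [hm_def, h]; exact le_add_of_nonneg_right (by positivity)
  · rw [hm_def, h]; exact le_add_of_nonneg_left (by positivity)

lemma setIntegral_near_zero_le (hp : p < 1) (hr : 0 ≤ r) (a : ℝ) :
    ∫ θ in {θ | |θ| ≤ |a| / 2}, (1 + |θ|) ^ (-p) * (1 + |a - θ|) ^ (-r)
      ≤ 2 ^ r * 2 / (1 - p) * (1 + |a|) ^ (1 - (p + r)) := by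
  set S := {θ : ℝ | |θ| ≤ |a| / 2}
  have hS : MeasurableSet S := measurableSet_le measurable_abs measurable_const
  have hint : IntegrableOn (fun θ : ℝ => (1 + |θ|) ^ (-p)) S := by
    rw [show S = Icc (-(|a| / 2)) (|a| / 2) from
      ext fun _ => by simp only [S, mem_ofPred_eq, mem_Icc, abs_le]]
    exact Continuous.integrableOn_Icc
      (Continuous.rpow_const (by fun_prop) fun _ => Or.inl (by positivity))
  have hpt : ∀ θ ∈ S, (1 + |θ|) ^ (-p) * (1 + |a - θ|) ^ (-r)
      ≤ 2 ^ r * (1 + |a|) ^ (-r) * (1 + |θ|) ^ (-p) := fun θ hθ => by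
    rw [mul_comm]
    exact mul_le_mul_of_nonneg_right (rpow_neg_le_mul_rpow_neg (by positivity) two_pos hr
      (one_add_abs_le_two_mul_of_abs_le_half hθ)) (by positivity)
  have hgrow : (1 + |a| / 2) ^ (1 - p) ≤ (1 + |a|) ^ (1 - p) :=
    Real.rpow_le_rpow (by positivity) (by linarith [abs_nonneg a]) (by linarith)
  have hp' : 0 < 1 - p := by linarith
  calc _ ≤ ∫ θ in S, 2 ^ r * (1 + |a|) ^ (-r) * (1 + |θ|) ^ (-p) :=
        integral_mono_of_nonneg (Filter.Eventually.of_forall fun θ => by positivity)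
          (hint.const_mul _) (ae_restrict_of_forall_mem hS hpt)
    _ = 2 ^ r * (1 + |a|) ^ (-r) * (2 * (((1 + |a| / 2) ^ (1 - p) - 1) / (1 - p))) := by
        rw [integral_const_mul, setIntegral_abs_le_one_add_abs_rpow_neg hp (by positivity)]
    _ ≤ 2 ^ r * (1 + |a|) ^ (-r) * (2 * ((1 + |a|) ^ (1 - p) / (1 - p))) := by
        gcongr
        linarith
    _ = 2 ^ r * 2 / (1 - p) * (1 + |a|) ^ (1 - (p + r)) := by
        rw [show 1 - (p + r) = -r + (1 - p) by ring, Real.rpow_add (by positivity)]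
        ring

lemma setIntegral_near_a_le (hr : r < 1) (hp : 0 ≤ p) (a : ℝ) :
    ∫ θ in {θ | |a - θ| ≤ |a| / 2}, (1 + |θ|) ^ (-p) * (1 + |a - θ|) ^ (-r)
      ≤ 2 ^ p * 2 / (1 - r) * (1 + |a|) ^ (1 - (p + r)) := by
  have hsymm := (Measure.measurePreserving_sub_left volume a).setIntegral_preimage_emb
    (MeasurableEquiv.subLeft a).measurableEmbedding
    (fun θ => (1 + |θ|) ^ (-r) * (1 + |a - θ|) ^ (-p)) {θ | |θ| ≤ |a| / 2}
  simp only [sub_sub_cancel, mul_comm ((1 + |a - _|) ^ (-r))] at hsymm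
  rw [add_comm p r]
  exact hsymm.trans_le (setIntegral_near_zero_le hr hp a)

lemma setIntegral_far_le (hr : 0 ≤ r) (hpr : 1 < p + r) (a : ℝ) :
    ∫ θ in {θ | |a| / 2 < |θ|} ∩ {θ | |a| / 2 < |a - θ|},
        (1 + |θ|) ^ (-p) * (1 + |a - θ|) ^ (-r)
      ≤ 3 ^ r * 2 ^ (p + r) / (p + r - 1) * (1 + |a|) ^ (1 - (p + r)) := by
  set C := {θ : ℝ | |a| / 2 < |θ|} ∩ {θ | |a| / 2 < |a - θ|}
  have hC : MeasurableSet C :=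
    (measurableSet_lt measurable_const measurable_abs).inter
      (measurableSet_lt measurable_const (measurable_const.sub measurable_id).abs)
  have hint := (integrable_one_add_abs_rpow_neg hpr).const_mul (3 ^ r)
  have hpt : ∀ θ ∈ C, (1 + |θ|) ^ (-p) * (1 + |a - θ|) ^ (-r)
      ≤ 3 ^ r * (1 + |θ|) ^ (-(p + r)) := fun θ hθ => by
    calc _ ≤ (1 + |θ|) ^ (-p) * (3 ^ r * (1 + |θ|) ^ (-r)) :=
          mul_le_mul_of_nonneg_left (rpow_neg_le_mul_rpow_neg (by positivity) three_pos hr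
            (one_add_abs_le_three_mul_of_half_lt_abs hθ.2)) (by positivity)
      _ = 3 ^ r * (1 + |θ|) ^ (-(p + r)) := by
          rw [neg_add, Real.rpow_add (by positivity)]
          ring
  have hdecay : (1 + |a| / 2) ^ (1 - (p + r)) ≤ 2 ^ (p + r - 1) * (1 + |a|) ^ (1 - (p + r)) := by
    simpa only [neg_sub] using rpow_neg_le_mul_rpow_neg (p := p + r - 1) (by positivity)
      two_pos (by linarith) (by linarith : 1 + |a| ≤ 2 * (1 + |a| / 2))
  have hq : 0 < p + r - 1 := by linarith
  calc _ ≤ ∫ θ in C, 3 ^ r * (1 + |θ|) ^ (-(p + r)) :=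
        integral_mono_of_nonneg (Filter.Eventually.of_forall fun θ => by positivity)
          hint.integrableOn (ae_restrict_of_forall_mem hC hpt)
    _ ≤ ∫ θ in {θ | |a| / 2 < |θ|}, 3 ^ r * (1 + |θ|) ^ (-(p + r)) :=
        setIntegral_mono_set hint.integrableOn
          (Filter.Eventually.of_forall fun θ => by positivity) inter_subset_left.eventuallyLE
    _ = 3 ^ r * (2 * ((1 + |a| / 2) ^ (1 - (p + r)) / (p + r - 1))) := by
        rw [integral_const_mul, setIntegral_lt_abs_one_add_abs_rpow_neg hpr (by positivity)]
    _ ≤ 3 ^ r * (2 * (2 ^ (p + r - 1) * (1 + |a|) ^ (1 - (p + r)) / (p + r - 1))) := by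
        gcongr
    _ = 3 ^ r * 2 ^ (p + r) / (p + r - 1) * (1 + |a|) ^ (1 - (p + r)) := by
        rw [Real.rpow_sub_one two_ne_zero]
        ring

theorem exists_integral_le (hp : p < 1) (hr : r < 1) (hpr : 1 < p + r) :
    ∃ C > 0, ∀ a : ℝ, ∫ θ, (1 + |θ|) ^ (-p) * (1 + |a - θ|) ^ (-r)
      ≤ C * (1 + |a|) ^ (1 - (p + r)) := by
  have hp₀ : 0 ≤ p := by linarith
  have hr₀ : 0 ≤ r := by linarith
  have hp₁ : 0 < 1 - p := by linarith
  have hr₁ : 0 < 1 - r := by linarith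
  have hpr₁ : 0 < p + r - 1 := by linarith
  refine ⟨2 ^ r * 2 / (1 - p) + 2 ^ p * 2 / (1 - r) + 3 ^ r * 2 ^ (p + r) / (p + r - 1),
    add_pos (add_pos (div_pos (by positivity) hp₁) (div_pos (by positivity) hr₁))
      (div_pos (by positivity) hpr₁), fun a => ?_⟩
  have hcover : {θ : ℝ | |θ| ≤ |a| / 2} ∪ {θ | |a - θ| ≤ |a| / 2}
      ∪ ({θ | |a| / 2 < |θ|} ∩ {θ | |a| / 2 < |a - θ|}) = univ := by
    ext θ
    simp only [mem_union, mem_inter_iff, mem_ofPred_eq, mem_univ, iff_true, ← not_le]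
    tauto
  calc _ ≤ _ := integral_le_setIntegral_add_add_of_union_eq_univ (fun θ => by positivity)
        (integrable hp₀ hr₀ hpr a) hcover
    _ ≤ _ := add_le_add (add_le_add (setIntegral_near_zero_le hp hr₀ a)
        (setIntegral_near_a_le hr hp₀ a)) (setIntegral_far_le hr₀ hpr a)
    _ = _ := by ring

end WeightConvolution

lemma jb_pos (x : ℝ) : 0 < jb x := Real.sqrt_pos.2 (by positivity)

lemma jb_le_one_add_abs (x : ℝ) : jb x ≤ 1 + |x| :=
  Real.sqrt_le_iff.2 ⟨by positivity, by nlinarith [sq_abs x, abs_nonneg x]⟩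

lemma one_add_abs_le_sqrt_two_mul_jb (x : ℝ) : 1 + |x| ≤ Real.sqrt 2 * jb x := by
  rw [jb, ← Real.sqrt_mul zero_le_two]
  exact Real.le_sqrt_of_sq_le (by nlinarith [sq_abs x, sq_nonneg (|x| - 1)])

lemma one_div_jb_rpow_mul_le {p r : ℝ} (hp : 0 ≤ p) (hr : 0 ≤ r) (x y : ℝ) :
    1 / (jb x ^ p * jb y ^ r)
      ≤ Real.sqrt 2 ^ (p + r) * ((1 + |x|) ^ (-p) * (1 + |y|) ^ (-r)) := by
  have hbound : ∀ {s : ℝ} (z : ℝ), 0 ≤ s → jb z ^ (-s) ≤ Real.sqrt 2 ^ s * (1 + |z|) ^ (-s) :=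
    fun z hs => rpow_neg_le_mul_rpow_neg (by positivity) (by positivity) hs
      (one_add_abs_le_sqrt_two_mul_jb z)
  rw [one_div, mul_inv, ← Real.rpow_neg (jb_pos x).le, ← Real.rpow_neg (jb_pos y).le,
    Real.rpow_add (by positivity)]
  calc _ ≤ (Real.sqrt 2 ^ p * (1 + |x|) ^ (-p)) * (Real.sqrt 2 ^ r * (1 + |y|) ^ (-r)) :=
        mul_le_mul (hbound x hp) (hbound y hr) (Real.rpow_nonneg (jb_pos y).le _)
          (by positivity)
    _ = _ := by ring

theorem stmt_2_general (δ₁ δ₂ : ℝ) (h₁₂ : δ₁ ≤ δ₂) (hsum : 1 < δ₁ + δ₂)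
    (h₂ : δ₂ < 1) :
    ∃ C > 0, ∀ a : ℝ,
      (∫ θ : ℝ, 1 / (jb θ ^ δ₁ * jb (a - θ) ^ δ₂)) ≤ C / jb a ^ (δ₁ - (1 - δ₂)) := by
  have hδ₁ : 0 ≤ δ₁ := by linarith
  have hδ₂ : 0 ≤ δ₂ := by linarith
  obtain ⟨C, hC, hconv⟩ := WeightConvolution.exists_integral_le (h₁₂.trans_lt h₂) h₂ hsum
  refine ⟨Real.sqrt 2 ^ (δ₁ + δ₂) * C, by positivity, fun a => ?_⟩
  have hdecay : (1 + |a|) ^ (1 - (δ₁ + δ₂)) ≤ (jb a ^ (δ₁ - (1 - δ₂)))⁻¹ := by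
    rw [← Real.rpow_neg (jb_pos a).le, show -(δ₁ - (1 - δ₂)) = 1 - (δ₁ + δ₂) by ring]
    exact Real.rpow_le_rpow_of_nonpos (jb_pos a) (jb_le_one_add_abs a) (by linarith)
  calc _ ≤ ∫ θ, Real.sqrt 2 ^ (δ₁ + δ₂) * ((1 + |θ|) ^ (-δ₁) * (1 + |a - θ|) ^ (-δ₂)) :=
        integral_mono_of_nonneg (Filter.Eventually.of_forall fun θ => by
            have := jb_pos θ; have := jb_pos (a - θ); positivity)
          ((WeightConvolution.integrable hδ₁ hδ₂ hsum a).const_mul _)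
          (Filter.Eventually.of_forall fun θ => one_div_jb_rpow_mul_le hδ₁ hδ₂ θ (a - θ))
    _ ≤ Real.sqrt 2 ^ (δ₁ + δ₂) * (C * (jb a ^ (δ₁ - (1 - δ₂)))⁻¹) := by
        rw [integral_const_mul]
        gcongr
        exact (hconv a).trans (by gcongr)
    _ = _ := by ring

/-- Convolution estimate for Japanese-bracket weights: for `0 < δ₁ ≤ δ₂`, `δ₁ + δ₂ > 1`,
`δ₂ < 1`, we have `∫ dθ / (⟨θ⟩^{δ₁} ⟨a-θ⟩^{δ₂}) ≤ C / ⟨a⟩^{δ₁ - (1-δ₂)}`. -/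
theorem stmt_2 (δ₁ δ₂ : ℝ) (h₁ : 0 < δ₁) (h₁₂ : δ₁ ≤ δ₂) (hsum : 1 < δ₁ + δ₂)
    (h₂ : δ₂ < 1) :
    ∃ C > 0, ∀ a : ℝ,
      (∫ θ : ℝ, 1 / (jb θ ^ δ₁ * jb (a - θ) ^ δ₂)) ≤ C / jb a ^ (δ₁ - (1 - δ₂)) :=
  stmt_2_general δ₁ δ₂ h₁₂ hsum h₂
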